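/- arXiv:2403.09654 — 8 statements merged into one kernel-verified Lean document; each statement's English description precedes it below -/
import Mathlib

section
/- For every natural number q₀ ≥ 2 there exist a natural number N, a positive natural number m, a strictly increasing sequence of natural numbers q₁ < q₂ < ... < q_N with each q_k ≥ 2, and signs δ₁, ..., δ_N ∈ {1, -1}, such that π/4 = m·arctan(1/q₀) + Σ_{k=1}^{N} δ_k·arctan(1/q_k). -/
/-! Splitting `arctan (1/x) = arctan (1/(x+1)) + arctan (1/(x²+x+1))` telescopes down from
`arctan 1 = π/4`, so `π/4 = arctan (1/q₀) + ∑_{k=1}^{q₀-1} arctan (1/(k²+k+1))`; the numbers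
`k² + k + 1` are strictly increasing and at least `3`, so all signs are `+1` and `m = 1`. -/

open Real Finset

theorem Real.arctan_one_div_eq_add {x : ℝ} (hx : 0 < x) :
    arctan (1 / x) = arctan (1 / (x + 1)) + arctan (1 / (x ^ 2 + x + 1)) := by
  have hprod : 1 / (x + 1) * (1 / (x ^ 2 + x + 1)) < 1 := by
    rw [div_mul_div_comm, div_lt_one (by positivity)]
    nlinarith
  rw [arctan_add hprod]
  congr 1
  rw [eq_div_iff (by linarith)]
  field_simp
  ring

theorem Real.pi_div_four_eq_arctan_add_sum (n : ℕ) :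
    π / 4 = arctan (1 / ((n : ℝ) + 1)) +
      ∑ k ∈ Icc 1 n, arctan (1 / ((k : ℝ) ^ 2 + k + 1)) := by
  induction n with
  | zero => simp [arctan_one]
  | succ n ih =>
    rw [sum_Icc_succ_top (by omega), ih, arctan_one_div_eq_add (by positivity : (0 : ℝ) < n + 1)]
    push_cast
    ring

/-- For every natural number `q₀ ≥ 2` there exist `N : ℕ`, a positive natural number `m`,
a strictly increasing sequence `q 1 < q 2 < ... < q N` of natural numbers each `≥ 2`,
and signs `δ k ∈ {1, -1}`, such that
`π/4 = m·arctan(1/q₀) + ∑_{k=1}^{N} δ k · arctan(1/q k)`. -/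
theorem machin_like_formula_exists (q₀ : ℕ) (hq₀ : 2 ≤ q₀) :
    ∃ (N : ℕ) (m : ℕ) (q : ℕ → ℕ) (δ : ℕ → ℤ),
      0 < m ∧
      (∀ k, 1 ≤ k → k < N → q k < q (k + 1)) ∧
      (∀ k, 1 ≤ k → k ≤ N → 2 ≤ q k) ∧
      (∀ k, 1 ≤ k → k ≤ N → δ k = 1 ∨ δ k = -1) ∧
      Real.pi / 4 = (m : ℝ) * Real.arctan (1 / (q₀ : ℝ)) +
        ∑ k ∈ Finset.Icc 1 N, (δ k : ℝ) * Real.arctan (1 / (q k : ℝ)) := by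
  obtain ⟨N, rfl⟩ : ∃ N, q₀ = N + 1 := ⟨q₀ - 1, by omega⟩
  refine ⟨N, 1, fun k => k ^ 2 + k + 1, fun _ => 1, one_pos,
    fun k _ _ => by nlinarith, fun k hk _ => by nlinarith, fun _ _ _ => Or.inl rfl, ?_⟩
  simpa using pi_div_four_eq_arctan_add_sum N
end

section
/- For every natural number q₀ ≥ 2 there exist a natural number N, a positive natural number m, natural numbers q₁, ..., q_N, and signs δ₁, ..., δ_N ∈ {1, -1}, such that π/4 = m·arctan(1/q₀) + Σ_{k=1}^{N} δ_k·arctan(1/q_k), with q₁ ≥ 2·q₀, q_{k+1} > q_k² for all 1 ≤ k < N, and moreover the Lehmer measure satisfies 1/log₁₀(q₀) + Σ_{k=1}^{N} 1/log₁₀(q_k) < 3/log₁₀(q₀). -/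
/-!
Multiplying `1 + i` by `q₀ - i` turns its argument by `-arctan (1 / q₀)`. Stop at the first `m` for
which `v + u i = (1 + i) (q₀ - i) ^ m` satisfies `2 q₀ |u| ≤ v`: then
`π / 4 = m arctan (1 / q₀) + arctan (u / v)`, and `u ≠ 0`, since otherwise `q₀ + i` would divide
`(1 + i) (-2i) ^ m` and `q₀² + 1` would be a power of two.

The remainder is expanded greedily: with `n` the integer nearest to `v / |u|`,
`arctan (u / v) = ± arctan (1 / n) + arctan (U / V)` with `|U| ≤ |u| / 2`, and the integer
nearest to `V / |U|` exceeds `n²`. As every denominator exceeds the square of the previous one,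
the terms `1 / log q_k` decay at least like `2⁻ᵏ`, so the Lehmer measure is below
`1 / log q₀ + 2 / log q₁ < 3 / log q₀`.
-/

open Real Finset

theorem sum_Icc_one_comp_sub_one {M : Type*} [AddCommMonoid M] (f : ℕ → M) (N : ℕ) :
    ∑ k ∈ Icc 1 N, f (k - 1) = ∑ k ∈ range N, f k := by
  rw [range_eq_Ico, ← Ico_add_one_right_eq_Icc]
  simpa using (sum_Ico_add' (fun k => f (k - 1)) 0 N 1).symm

theorem not_sq_add_one_dvd_two_pow {q : ℕ} (hq : 2 ≤ q) (n : ℕ) : ¬ q ^ 2 + 1 ∣ 2 ^ n := by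
  intro h
  obtain ⟨j, -, hj⟩ := (Nat.dvd_prime_pow Nat.prime_two).1 h
  have hj2 : 2 ≤ j := by
    by_contra! hj1
    have : 2 ^ j ≤ 2 ^ 1 := Nat.pow_le_pow_right two_pos (by omega)
    nlinarith
  have h4 : ((q ^ 2 + 1 : ℕ) : ZMod 4) = 0 := by
    rw [ZMod.natCast_eq_zero_iff, hj]
    exact pow_dvd_pow 2 hj2
  push_cast at h4
  generalize (q : ZMod 4) = x at h4
  revert x
  decide

/-- `(1 + i) (q - i) ^ k`, whose argument is `π / 4 - k arctan (1 / q)` as long as it stays in the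
right half-plane. -/
def machinIterate (q : ℤ) (k : ℕ) : GaussianInt := ⟨1, 1⟩ * ⟨q, -1⟩ ^ k

section machinIterate

variable (q : ℤ) (k : ℕ)

@[simp] theorem machinIterate_zero : machinIterate q 0 = ⟨1, 1⟩ := by simp [machinIterate]

theorem machinIterate_succ_re :
    (machinIterate q (k + 1)).re = q * (machinIterate q k).re + (machinIterate q k).im := by
  simp [machinIterate, pow_succ, ← mul_assoc]; ring

theorem machinIterate_succ_im :
    (machinIterate q (k + 1)).im = q * (machinIterate q k).im - (machinIterate q k).re := by
  simp [machinIterate, pow_succ, ← mul_assoc]; ring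

end machinIterate

theorem machinIterate_im_ne_zero {q : ℕ} (hq : 2 ≤ q) (k : ℕ) : (machinIterate q k).im ≠ 0 := by
  intro h
  rcases k with _ | k
  · simp at h
  have hreal : star (machinIterate q (k + 1)) = machinIterate q (k + 1) :=
    Zsqrtd.ext rfl (by simp [h])
  have hdvd : (⟨q, 1⟩ : GaussianInt) ∣ machinIterate q (k + 1) := by
    rw [← hreal, machinIterate, star_mul, star_pow]
    exact (dvd_pow_self _ k.succ_ne_zero).mul_right _
  -- modulo `q + i` we have `q - i ≡ -2i`, so `q + i ∣ (1 + i)(-2i)^(k+1)`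
  have hmod : (⟨q, 1⟩ : GaussianInt) ∣ ⟨q, -1⟩ ^ (k + 1) - ⟨0, -2⟩ ^ (k + 1) := by
    have hsub : (⟨q, -1⟩ - ⟨0, -2⟩ : GaussianInt) = ⟨q, 1⟩ := by ext <;> simp
    exact hsub ▸ sub_dvd_pow_sub_pow _ _ (k + 1)
  have hdvd' : (⟨q, 1⟩ : GaussianInt) ∣ ⟨1, 1⟩ * ⟨0, -2⟩ ^ (k + 1) := by
    have := dvd_sub hdvd (hmod.mul_left ⟨1, 1⟩)
    rwa [machinIterate, mul_sub, sub_sub_cancel] at this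
  have hN (a b : ℤ) : Zsqrtd.normMonoidHom (⟨a, b⟩ : GaussianInt) = a ^ 2 + b ^ 2 := by
    simp [Zsqrtd.normMonoidHom, Zsqrtd.norm_def]; ring
  have hnorm : (q ^ 2 + 1 : ℤ) ∣ 2 * 4 ^ (k + 1) := by
    have h := map_dvd Zsqrtd.normMonoidHom hdvd'
    rw [map_mul, map_pow, hN, hN, hN] at h
    norm_num at h
    exact h
  have hpow : (2 : ℤ) ^ (2 * k + 3) = 2 * 4 ^ (k + 1) := by
    rw [pow_add 2 (2 * k), pow_mul]; ring
  exact not_sq_add_one_dvd_two_pow hq _ (by exact_mod_cast hpow ▸ hnorm)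

theorem arctan_div_eq_arctan_one_div_add {u v n : ℝ} (hv : 0 < v) (hn : 0 < n)
    (hV : 0 < n * v + u) :
    arctan (u / v) = arctan (1 / n) + arctan ((n * u - v) / (n * v + u)) := by
  have hlt : 1 / n * ((n * u - v) / (n * v + u)) < 1 := by
    rw [div_mul_div_comm, div_lt_one (by positivity)]
    nlinarith [mul_pos (mul_pos hn hn) hv]
  have hD : 1 - 1 / n * ((n * u - v) / (n * v + u)) = (n ^ 2 + 1) * v / (n * (n * v + u)) := by
    field_simp
    ring
  rw [arctan_add hlt, hD]
  congr 1
  rw [div_add_div _ _ hn.ne' hV.ne', div_div_div_cancel_right₀ (by positivity),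
    div_eq_div_iff (by positivity) (by positivity)]
  ring

theorem arctan_div_eq_mul_arctan_one_div_add {u v n δ : ℝ} (hδ : δ = 1 ∨ δ = -1) (hv : 0 < v)
    (hn : 0 < n) (hV : 0 < n * v + δ * u) :
    arctan (u / v) = δ * arctan (1 / n) + arctan ((n * u - δ * v) / (n * v + δ * u)) := by
  rcases hδ with rfl | rfl
  · simpa using arctan_div_eq_arctan_one_div_add hv hn (by simpa using hV)
  · have h := arctan_div_eq_arctan_one_div_add (u := -u) hv hn (by linarith)
    rw [neg_div, arctan_neg] at h
    rw [show (n * u - -1 * v) / (n * v + -1 * u) = -((n * -u - v) / (n * v + -u)) by ring,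
      arctan_neg]
    linarith

theorem machinIterate_re_pos_and_pi_div_four_eq {q : ℕ} (hq : 0 < q) (k : ℕ)
    (hk : ∀ j < k, (machinIterate q j).re < 2 * q * (machinIterate q j).im) :
    0 < (machinIterate q k).re ∧
      π / 4 = k * arctan (1 / q) + arctan ((machinIterate q k).im / (machinIterate q k).re) := by
  induction k with
  | zero => simp
  | succ k ih =>
    obtain ⟨hv, hπ⟩ := ih fun j hj => hk j (by omega)
    have hu : 0 < (machinIterate q k).im := by nlinarith [hk k (by omega)]
    have hv' : 0 < (machinIterate q (k + 1)).re := by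
      rw [machinIterate_succ_re]; positivity
    refine ⟨hv', ?_⟩
    have hV : (0 : ℝ) < q * (machinIterate q k).re + (machinIterate q k).im := by
      exact_mod_cast (machinIterate_succ_re q k) ▸ hv'
    rw [hπ, arctan_div_eq_arctan_one_div_add (by exact_mod_cast hv) (by exact_mod_cast hq) hV,
      machinIterate_succ_re, machinIterate_succ_im]
    push_cast
    ring

theorem exists_pi_div_four_eq_mul_arctan_add_arctan {q : ℕ} (hq : 2 ≤ q) :
    ∃ (m : ℕ) (u v : ℤ), 0 < m ∧ u ≠ 0 ∧ 0 < v ∧ 2 * q * |u| ≤ v ∧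
      π / 4 = m * arctan (1 / q) + arctan (u / v) := by
  have hstop : ∃ k, ¬ (machinIterate q k).re < 2 * q * (machinIterate q k).im := by
    by_contra! hall
    obtain ⟨k, hk⟩ := exists_nat_gt (π / 4 / arctan (1 / q))
    obtain ⟨hv, hπ⟩ := machinIterate_re_pos_and_pi_div_four_eq (by omega) k fun j _ => hall j
    have hu : 0 < (machinIterate q k).im := by nlinarith [hall k]
    have hrem : 0 < arctan (((machinIterate q k).im : ℝ) / (machinIterate q k).re) :=
      arctan_pos.2 (by positivity)
    rw [div_lt_iff₀ (arctan_pos.2 (by positivity))] at hk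
    linarith
  classical
  obtain ⟨k, hk⟩ : ∃ k, Nat.find hstop = k + 1 := by
    refine Nat.exists_eq_succ_of_ne_zero fun h0 => ?_
    have := Nat.find_spec hstop
    rw [h0] at this
    simp at this
    omega
  have hcont : ∀ j < k + 1, (machinIterate q j).re < 2 * q * (machinIterate q j).im :=
    fun j hj => not_not.1 (Nat.find_min hstop (hk ▸ hj))
  obtain ⟨hv, hπ⟩ := machinIterate_re_pos_and_pi_div_four_eq (by omega) (k + 1) hcont
  obtain ⟨hvk, -⟩ :=
    machinIterate_re_pos_and_pi_div_four_eq (by omega) k fun j hj => hcont j (by omega)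
  have hstopk := not_lt.1 (hk ▸ Nat.find_spec hstop)
  refine ⟨k + 1, _, _, k.succ_pos, machinIterate_im_ne_zero hq _, hv, ?_, hπ⟩
  have hcontk := hcont k k.lt_succ_self
  rw [machinIterate_succ_re, machinIterate_succ_im] at hstopk ⊢
  rw [mul_comm, ← abs_of_pos (show (0 : ℤ) < 2 * q by omega), ← abs_mul, abs_le]
  -- writing `machinIterate q j = v_j + u_j i`:
  -- `2q u_{k+1} + v_{k+1} = (2q² + 1) u_k - q v_k > u_k > 0`
  have hq0 : (0 : ℤ) < q := by omega
  have hu : 0 < (machinIterate q k).im := by nlinarith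
  constructor <;> nlinarith [mul_lt_mul_of_pos_left hcontk hq0]

theorem exists_nat_ge_two_mul_abs_mul_sub_le {a v : ℤ} {t : ℕ} (ha : 0 < a)
    (h : (2 * t - 1) * a ≤ 2 * v) : ∃ n : ℕ, t ≤ n ∧ 2 * |n * a - v| ≤ a := by
  set n := (2 * v + a) / (2 * a)
  have hlow : n * (2 * a) ≤ 2 * v + a := Int.ediv_mul_le _ (by positivity)
  have hhigh : 2 * v + a < (n + 1) * (2 * a) := Int.lt_ediv_add_one_mul_self _ (by positivity)
  have htn : (t : ℤ) ≤ n := Int.le_ediv_of_mul_le (by positivity) (by linarith)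
  refine ⟨n.toNat, by omega, ?_⟩
  rw [Int.toNat_of_nonneg (by omega)]
  rcases abs_cases (n * a - v) with ⟨habs, -⟩ | ⟨habs, -⟩ <;> rw [habs] <;> linarith

theorem exists_arctan_div_eq_mul_arctan_one_div_add {u v : ℤ} {t : ℕ} (hu : u ≠ 0) (hv : 0 < v)
    (ht : 0 < t) (h : (2 * t - 1) * |u| ≤ 2 * v) :
    ∃ (n : ℕ) (δ U V : ℤ), t ≤ n ∧ (δ = 1 ∨ δ = -1) ∧ 0 < V ∧ 2 * |U| ≤ |u| ∧
      (2 * ((n ^ 2 + 1 : ℕ) : ℤ) - 1) * |U| ≤ 2 * V ∧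
      arctan (u / v) = δ * arctan (1 / n) + arctan (U / V) := by
  obtain ⟨n, htn, hn⟩ := exists_nat_ge_two_mul_abs_mul_sub_le (abs_pos.2 hu) h
  obtain ⟨δ, hδ, hδu⟩ : ∃ δ : ℤ, (δ = 1 ∨ δ = -1) ∧ δ * u = |u| := by
    rcases abs_cases u with ⟨hu', -⟩ | ⟨hu', -⟩
    exacts [⟨1, .inl rfl, by simp [hu']⟩, ⟨-1, .inr rfl, by simp [hu']⟩]
  have hV : 0 < n * v + δ * u := by rw [hδu]; positivity
  have hU : |n * u - δ * v| = |n * |u| - v| := by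
    have hδU : n * |u| - v = δ * (n * u - δ * v) := by
      rw [← hδu]; rcases hδ with rfl | rfl <;> ring
    rw [hδU, abs_mul]
    rcases hδ with rfl | rfl <;> simp
  refine ⟨n, δ, n * u - δ * v, n * v + δ * u, htn, hδ, hV, hU ▸ hn, ?_, ?_⟩
  · rw [hU, hδu]
    push_cast
    have hn1 : (1 : ℤ) ≤ n := by omega
    have h2v : (2 * n - 1) * |u| ≤ 2 * v := by linarith [le_abs_self (n * |u| - v)]
    nlinarith [abs_nonneg (n * |u| - v), abs_nonneg u]
  · have hδ' : (δ : ℝ) = 1 ∨ (δ : ℝ) = -1 := by rcases hδ with rfl | rfl <;> simp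
    rw [arctan_div_eq_mul_arctan_one_div_add (u := u) (v := v) (n := n) hδ' (by exact_mod_cast hv)
      (by exact_mod_cast ht.trans_le htn) (by exact_mod_cast hV)]
    push_cast
    rfl

theorem exists_arctan_div_eq_sum {u v : ℤ} {t : ℕ} (hu : u ≠ 0) (hv : 0 < v) (ht : 0 < t)
    (h : (2 * t - 1) * |u| ≤ 2 * v) :
    ∃ (N : ℕ) (q : ℕ → ℕ) (δ : ℕ → ℤ), 0 < N ∧ (∀ k < N, δ k = 1 ∨ δ k = -1) ∧ t ≤ q 0 ∧
      (∀ k, k + 1 < N → q k ^ 2 < q (k + 1)) ∧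
      arctan (u / v) = ∑ k ∈ range N, δ k * arctan (1 / q k) := by
  induction hk : u.natAbs using Nat.strong_induction_on generalizing u v t with
  | _ k ih =>
  obtain ⟨n, δ₀, U, V, htn, hδ₀, hV, hUu, hUV, hstep⟩ :=
    exists_arctan_div_eq_mul_arctan_one_div_add hu hv ht h
  rcases eq_or_ne U 0 with rfl | hU
  · exact ⟨1, fun _ => n, fun _ => δ₀, one_pos, fun _ _ => hδ₀, htn, fun _ _ => by omega,
      by simpa using hstep⟩
  have hlt : U.natAbs < k := by
    rw [← hk]; zify; have := abs_pos.2 hU; linarith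
  obtain ⟨N, q, δ, hN, hδ, hq₀, hq, hsum⟩ := ih _ hlt hU hV (by positivity) hUV rfl
  refine ⟨N + 1, fun | 0 => n | k + 1 => q k, fun | 0 => δ₀ | k + 1 => δ k, N.succ_pos, ?_,
    htn, ?_, ?_⟩
  · rintro (_ | k) hk
    exacts [hδ₀, hδ k (by omega)]
  · rintro (_ | k) hk
    exacts [by simp only; omega, hq k (by omega)]
  · rw [sum_range_succ', hstep, hsum, add_comm]

theorem sum_one_div_logb_le {b : ℝ} (hb : 1 < b) {x : ℕ → ℝ} {N : ℕ} (hx₀ : 1 < x 0)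
    (hx : ∀ k, k + 1 < N → x k ^ 2 ≤ x (k + 1)) :
    ∑ k ∈ range N, 1 / logb b (x k) ≤ 2 / logb b (x 0) := by
  have hL₀ : 0 < logb b (x 0) := logb_pos hb hx₀
  have hgrowth : ∀ k < N, 1 < x k ∧ 2 ^ k * logb b (x 0) ≤ logb b (x k) := by
    intro k
    induction k with
    | zero => exact fun _ => by simpa using hx₀
    | succ k ih =>
      intro hk
      obtain ⟨hxk, hLk⟩ := ih (by omega)
      have hsq := hx k hk
      refine ⟨by nlinarith, ?_⟩
      calc 2 ^ (k + 1) * logb b (x 0) ≤ 2 * logb b (x k) := by rw [pow_succ]; linarith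
        _ = logb b (x k ^ 2) := by rw [logb_pow]; norm_num
        _ ≤ logb b (x (k + 1)) := logb_le_logb_of_le hb (by positivity) hsq
  calc ∑ k ∈ range N, 1 / logb b (x k)
      ≤ ∑ k ∈ range N, (1 / 2) ^ k * (1 / logb b (x 0)) := by
        refine sum_le_sum fun k hk => ?_
        rw [one_div_pow, div_mul_div_comm, one_mul]
        exact one_div_le_one_div_of_le (by positivity) (hgrowth k (mem_range.1 hk)).2
    _ ≤ 2 * (1 / logb b (x 0)) := by
        rw [← sum_mul]
        gcongr
        exact sum_geometric_two_le N
    _ = 2 / logb b (x 0) := by ring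

/-- For every natural number `q₀ ≥ 2` there is a Machin-like formula
`π/4 = m·arctan(1/q₀) + ∑_{k=1}^{N} δ k · arctan(1/q k)` whose denominators satisfy
`q 1 ≥ 2·q₀` and `q (k+1) > (q k)²` for `1 ≤ k < N`, and whose Lehmer measure satisfies
`1/log₁₀ q₀ + ∑_{k=1}^{N} 1/log₁₀ (q k) < 3/log₁₀ q₀`. -/
theorem machin_like_formula_with_lehmer_bound (q₀ : ℕ) (hq₀ : 2 ≤ q₀) :
    ∃ (N : ℕ) (m : ℕ) (q : ℕ → ℕ) (δ : ℕ → ℤ),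
      1 ≤ N ∧
      0 < m ∧
      (∀ k, 1 ≤ k → k ≤ N → δ k = 1 ∨ δ k = -1) ∧
      Real.pi / 4 = (m : ℝ) * Real.arctan (1 / (q₀ : ℝ)) +
        ∑ k ∈ Finset.Icc 1 N, (δ k : ℝ) * Real.arctan (1 / (q k : ℝ)) ∧
      2 * q₀ ≤ q 1 ∧
      (∀ k, 1 ≤ k → k < N → (q k) ^ 2 < q (k + 1)) ∧
      1 / Real.logb 10 (q₀ : ℝ) + ∑ k ∈ Finset.Icc 1 N, 1 / Real.logb 10 ((q k : ℝ)) <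
        3 / Real.logb 10 (q₀ : ℝ) := by
  obtain ⟨m, u, v, hm, hu, hv, huv, hπ⟩ := exists_pi_div_four_eq_mul_arctan_add_arctan hq₀
  obtain ⟨N, q, δ, hN, hδ, hq0, hq, hsum⟩ := exists_arctan_div_eq_sum (t := 2 * q₀) hu hv
    (by omega) (by push_cast; nlinarith [abs_nonneg u])
  have hlog : logb 10 q₀ < logb 10 (q 0) :=
    logb_lt_logb (by norm_num) (by positivity) (by exact_mod_cast (by omega : q₀ < q 0))
  have hlehmer := sum_one_div_logb_le (b := 10) (x := fun k => (q k : ℝ)) (N := N) (by norm_num)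
    (by exact_mod_cast (by omega : 1 < q 0)) fun k hk => by exact_mod_cast (hq k hk).le
  refine ⟨N, m, fun k => q (k - 1), fun k => δ (k - 1), hN, hm, fun k hk hkN => hδ _ (by omega),
    ?_, hq0, fun k hk hkN => ?_, ?_⟩
  · rw [sum_Icc_one_comp_sub_one (fun k => (δ k : ℝ) * arctan (1 / q k)), ← hsum, hπ]
  · simpa [Nat.sub_add_cancel hk] using hq (k - 1) (by omega)
  · rw [sum_Icc_one_comp_sub_one (fun k => 1 / logb 10 (q k : ℝ))]
    have hL₀ : 0 < logb 10 (q₀ : ℝ) := logb_pos (by norm_num) (by exact_mod_cast hq₀)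
    have : 2 / logb 10 (q 0 : ℝ) < 2 / logb 10 q₀ := div_lt_div_of_pos_left two_pos hL₀ hlog
    linarith [show 1 / logb 10 (q₀ : ℝ) + 2 / logb 10 q₀ = 3 / logb 10 q₀ by ring]
end

section
/- For every natural number q₀ ≥ 2 and every integer m, it holds that π/4 ≠ m·arctan(1/q₀). -/
/-!
If `n * arctan (1 / q) = π / 4`, then `(q + i) ^ n` has argument `π / 4`, so it equals `a (1 + i)`
for some `a ∈ ℤ`, and `(1 - i) (q + i) ^ n = (1 + i) (q - i) ^ n`. The ring map
`ℤ[i] → ℤ/(q² + 1)` with `i ↦ q` kills `q - i` and sends `q + i` to the unit `2q`, which forces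
`q² + 1 ∣ 2 ^ (n + 1)`. Since `q² + 1` is never divisible by `4`, this leaves only `q ≤ 1`.
-/

open Complex GaussianInt
open scoped Real

lemma Complex.one_add_mul_I_eq_sqrt_mul_exp (x : ℝ) :
    (1 + x * I : ℂ) = √(1 + x ^ 2) * exp (Real.arctan x * I) := by
  have hs : (√(1 + x ^ 2) : ℂ) ≠ 0 := ofReal_ne_zero.2 (by positivity)
  rw [exp_mul_I, ← ofReal_cos, ← ofReal_sin, Real.cos_arctan, Real.sin_arctan]
  push_cast
  field_simp

lemma Complex.re_eq_im_one_add_mul_I_pow {x : ℝ} {n : ℕ} (h : n * Real.arctan x = π / 4) :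
    ((1 + x * I) ^ n).re = ((1 + x * I) ^ n).im := by
  rw [one_add_mul_I_eq_sqrt_mul_exp, mul_pow, ← exp_nat_mul, ← mul_assoc,
    ← ofReal_natCast, ← ofReal_mul, h, exp_mul_I, ← ofReal_cos, ← ofReal_sin,
    Real.cos_pi_div_four, Real.sin_pi_div_four, ← ofReal_pow, re_ofReal_mul, im_ofReal_mul]
  simp

lemma GaussianInt.re_eq_im_pow_of_mul_arctan_eq {q : ℤ} (hq : q ≠ 0) {n : ℕ}
    (h : n * Real.arctan (1 / q) = π / 4) :
    ((⟨q, 1⟩ : GaussianInt) ^ n).re = ((⟨q, 1⟩ : GaussianInt) ^ n).im := by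
  have hz : ((⟨q, 1⟩ ^ n : GaussianInt) : ℂ) = (q : ℂ) ^ n * (1 + ((1 / q : ℝ)) * I) ^ n := by
    rw [← mul_pow, map_pow, toComplex_def']
    push_cast
    field_simp
  have := re_eq_im_one_add_mul_I_pow h
  rw [← Int.cast_inj (α := ℝ), intCast_re, intCast_im, hz, ← ofReal_intCast, ← ofReal_pow,
    re_ofReal_mul, im_ofReal_mul, this]

lemma GaussianInt.sq_add_one_dvd_two_pow_of_re_eq_im {q n : ℕ} (hn : n ≠ 0)
    (h : ((⟨q, 1⟩ : GaussianInt) ^ n).re = ((⟨q, 1⟩ : GaussianInt) ^ n).im) :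
    q ^ 2 + 1 ∣ 2 ^ (n + 1) := by
  set r : ZMod (q ^ 2 + 1) := (q : ZMod (q ^ 2 + 1))
  have hr : r * r = -1 := by
    have := ZMod.natCast_self (q ^ 2 + 1)
    push_cast at this
    linear_combination this
  let φ : GaussianInt →+* ZMod (q ^ 2 + 1) := Zsqrtd.lift ⟨r, by simpa using hr⟩
  set z : GaussianInt := ⟨q, 1⟩
  -- `(1 - i) z ^ n = 2 (z ^ n).re` is a rational integer, hence fixed by conjugation
  have hconj : z ^ n * ⟨1, -1⟩ = star (z ^ n) * ⟨1, 1⟩ := by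
    ext <;> simp [h, -star_pow]
  rw [star_pow] at hconj
  have hφ : φ z ^ n * φ ⟨1, -1⟩ = φ (star z) ^ n * φ ⟨1, 1⟩ := by
    simpa only [map_mul, map_pow] using congrArg φ hconj
  have hz : φ z = 2 * r := by simp [φ, z]; ring
  have hz_star : φ (star z) = 0 := by simp [φ, z, r]
  simp only [hz, hz_star, zero_pow hn, zero_mul, φ, Zsqrtd.lift_apply_apply, Int.cast_one,
    Int.cast_neg, neg_one_mul, ← sub_eq_add_neg] at hφ
  have h2 : ((2 ^ (n + 1) : ℕ) : ZMod (q ^ 2 + 1)) = 0 := by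
    push_cast
    calc (2 : ZMod (q ^ 2 + 1)) ^ (n + 1) = 2 ^ n * (-(r * r)) ^ n * (1 - r * r) := by
          rw [hr]; ring
      _ = (2 * r) ^ n * (1 - r) * ((1 + r) * (-r) ^ n) := by ring
      _ = 0 := by rw [hφ, zero_mul]
  exact (ZMod.natCast_eq_zero_iff _ _).1 h2

lemma Nat.le_one_of_sq_add_one_dvd_two_pow {q k : ℕ} (h : q ^ 2 + 1 ∣ 2 ^ k) : q ≤ 1 := by
  obtain ⟨j, -, hj⟩ := (Nat.dvd_prime_pow Nat.prime_two).1 h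
  have h4 : ¬ 4 ∣ q ^ 2 + 1 := by
    rcases Nat.even_or_odd q with ⟨a, rfl⟩ | ⟨a, rfl⟩ <;> ring_nf <;> omega
  have hj1 : j ≤ 1 := by
    by_contra hj1
    exact h4 (hj ▸ (pow_dvd_pow 2 (by omega : 2 ≤ j)))
  have : q ^ 2 + 1 ≤ 2 := hj ▸ Nat.pow_le_pow_right (by norm_num) hj1
  nlinarith

/-- For every natural number `q₀ ≥ 2` and every integer `m`, `π/4 ≠ m·arctan(1/q₀)`. -/
theorem no_single_term_machin (q₀ : ℕ) (hq₀ : 2 ≤ q₀) (m : ℤ) :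
    Real.pi / 4 ≠ (m : ℝ) * Real.arctan (1 / (q₀ : ℝ)) := by
  intro h
  have hθ : 0 < Real.arctan (1 / (q₀ : ℝ)) := Real.arctan_pos.2 (by positivity)
  have hm : 0 < m := by
    by_contra! hm
    nlinarith [Real.pi_pos, (Int.cast_nonpos (R := ℝ)).2 hm]
  lift m to ℕ using hm.le with n
  have hre : ((⟨q₀, 1⟩ : GaussianInt) ^ n).re = ((⟨q₀, 1⟩ : GaussianInt) ^ n).im :=
    re_eq_im_pow_of_mul_arctan_eq (by positivity) (by simpa using h.symm)
  have hdvd := sq_add_one_dvd_two_pow_of_re_eq_im (by omega) hre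
  have := Nat.le_one_of_sq_add_one_dvd_two_pow hdvd
  omega
end

section
/- Let q₀ be a natural number with q₀ ≥ 2 and set γ = (π/4)/arctan(1/q₀). Then 0 < π/4 − ⌊γ⌋·arctan(1/q₀) < arctan(1/q₀), and π/4 − ⌈γ⌉·arctan(1/q₀) < 0. -/
/-!
Write `θ = arctan (1/q₀)`, so `γ θ = π/4`, and all three inequalities follow from `θ > 0` once `γ`
is known not to be an integer. If `n θ = π/4`, then `(q₀ + i)^n = √(q₀² + 1)^n · e^{iπ/4}` has equal
real and imaginary parts. But `q₀ + i ≡ i` modulo `q₀`, so the Gaussian integer `x + iy = (q₀ + i)^n`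
satisfies `x² − y² ≡ ±1 (mod q₀)`, which rules out `x = y` when `q₀ ≥ 2`.
-/

open Complex

namespace GaussianInt

/-- Multiplication by `q + i` acts as multiplication by `i` modulo `q`, which negates `re² − im²`. -/
theorem pow_mk_re_sq_sub_im_sq_sq_modEq_one (q : ℤ) (n : ℕ) :
    (((⟨q, 1⟩ : GaussianInt) ^ n).re ^ 2 - ((⟨q, 1⟩ : GaussianInt) ^ n).im ^ 2) ^ 2 ≡ 1 [ZMOD q] := by
  induction n with
  | zero => simp
  | succ n ih =>
    set w := (⟨q, 1⟩ : GaussianInt) ^ n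
    have hflip : (w * ⟨q, 1⟩).re ^ 2 - (w * ⟨q, 1⟩).im ^ 2 ≡ -(w.re ^ 2 - w.im ^ 2) [ZMOD q] := by
      rw [Int.modEq_iff_dvd]
      exact ⟨-(q * w.re ^ 2 - 4 * w.re * w.im - q * w.im ^ 2), by simp; ring⟩
    rw [pow_succ (⟨q, 1⟩ : GaussianInt) n]
    calc _ ≡ (-(w.re ^ 2 - w.im ^ 2)) ^ 2 [ZMOD q] := hflip.pow 2
      _ = (w.re ^ 2 - w.im ^ 2) ^ 2 := by ring
      _ ≡ 1 [ZMOD q] := ih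

theorem pow_mk_re_ne_im {q : ℤ} (hq : 1 < q) (n : ℕ) :
    ((⟨q, 1⟩ : GaussianInt) ^ n).re ≠ ((⟨q, 1⟩ : GaussianInt) ^ n).im := by
  intro h
  have hdvd := pow_mk_re_sq_sub_im_sq_sq_modEq_one q n
  rw [h, sub_self, zero_pow two_ne_zero, Int.modEq_comm, Int.modEq_zero_iff_dvd] at hdvd
  have := Int.le_of_dvd one_pos hdvd
  omega

end GaussianInt

namespace Complex

theorem one_add_mul_I_eq_sqrt_mul_exp_arctan (x : ℝ) :
    1 + x * I = (√(1 + x ^ 2) : ℂ) * exp (Real.arctan x * I) := by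
  have hsqrt : (√(1 + x ^ 2) : ℂ) ≠ 0 := by
    exact_mod_cast (Real.sqrt_pos.2 (by positivity)).ne'
  rw [exp_mul_I, ← ofReal_cos, ← ofReal_sin, Real.cos_arctan, Real.sin_arctan]
  push_cast
  field_simp

theorem re_eq_im_of_natCast_mul_arctan_eq_pi_div_four {x : ℝ} {n : ℕ}
    (h : n * Real.arctan x = Real.pi / 4) : ((1 + x * I) ^ n).re = ((1 + x * I) ^ n).im := by
  rw [one_add_mul_I_eq_sqrt_mul_exp_arctan, mul_pow, ← ofReal_pow, ← exp_nat_mul, ← mul_assoc,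
    ← ofReal_natCast, ← ofReal_mul, h, exp_mul_I, ← ofReal_cos, ← ofReal_sin,
    Real.cos_pi_div_four, Real.sin_pi_div_four, re_ofReal_mul, im_ofReal_mul]
  simp

end Complex

theorem Real.pi_div_four_ne_intCast_mul_arctan_one_div {q : ℕ} (hq : 2 ≤ q) (n : ℤ) :
    Real.pi / 4 ≠ n * Real.arctan (1 / q) := by
  intro h
  have hθ : 0 < Real.arctan (1 / q) := Real.arctan_pos.2 (by positivity)
  lift n to ℕ using by
    by_contra! hn
    have : (n : ℝ) * Real.arctan (1 / q) < 0 := mul_neg_of_neg_of_pos (by exact_mod_cast hn) hθ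
    linarith [Real.pi_pos]
  apply GaussianInt.pow_mk_re_ne_im (q := q) (by omega) n
  have hq0 : (q : ℂ) ≠ 0 := by exact_mod_cast (by omega : q ≠ 0)
  have hcast : GaussianInt.toComplex ((⟨q, 1⟩ : GaussianInt) ^ n)
      = ((q ^ n : ℝ) : ℂ) * (1 + ((1 / q : ℝ) : ℂ) * I) ^ n := by
    rw [ofReal_pow, ← mul_pow, map_pow, GaussianInt.toComplex_def']
    push_cast
    field_simp
  have hre_im := re_eq_im_of_natCast_mul_arctan_eq_pi_div_four (x := 1 / q) (n := n)
    (by exact_mod_cast h.symm)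
  apply Int.cast_injective (α := ℝ)
  rw [GaussianInt.intCast_re, GaussianInt.intCast_im, hcast, re_ofReal_mul, im_ofReal_mul, hre_im]

/-- For `q₀ ≥ 2` and `γ = (π/4)/arctan(1/q₀)`:
`0 < π/4 − ⌊γ⌋·arctan(1/q₀) < arctan(1/q₀)` and `π/4 − ⌈γ⌉·arctan(1/q₀) < 0`. -/
theorem floor_ceil_remainder (q₀ : ℕ) (hq₀ : 2 ≤ q₀)
    (γ : ℝ) (hγ : γ = (Real.pi / 4) / Real.arctan (1 / (q₀ : ℝ))) :
    0 < Real.pi / 4 - (⌊γ⌋ : ℝ) * Real.arctan (1 / (q₀ : ℝ)) ∧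
    Real.pi / 4 - (⌊γ⌋ : ℝ) * Real.arctan (1 / (q₀ : ℝ)) < Real.arctan (1 / (q₀ : ℝ)) ∧
    Real.pi / 4 - (⌈γ⌉ : ℝ) * Real.arctan (1 / (q₀ : ℝ)) < 0 := by
  set θ := Real.arctan (1 / (q₀ : ℝ))
  have hθ : 0 < θ := Real.arctan_pos.2 (by positivity)
  have hπ : Real.pi / 4 = γ * θ := by rw [hγ]; field_simp
  have hγ_ne (n : ℤ) : γ ≠ n := fun hn ↦
    Real.pi_div_four_ne_intCast_mul_arctan_one_div hq₀ n (by rw [hπ, hn])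
  have hfloor : (⌊γ⌋ : ℝ) < γ := (Int.floor_le γ).lt_of_ne (hγ_ne _).symm
  have hceil : γ < ⌈γ⌉ := (Int.le_ceil γ).lt_of_ne (hγ_ne _)
  have hfloor_add_one : γ < ⌊γ⌋ + 1 := Int.lt_floor_add_one γ
  rw [hπ]
  refine ⟨?_, ?_, ?_⟩ <;> nlinarith
end

section
/- Let Aₙ, Bₙ, qₙ, A', B', q' be real numbers with Aₙ > 0, Bₙ > 0, qₙ > 0, A' > 0, such that qₙ ≤ Bₙ/Aₙ + 1/2, A' ≤ Aₙ/2, B' = qₙ·Bₙ + Aₙ, and q' ≥ B'/A' − 1/2. Then q' > qₙ². -/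
/-! From `qₙ ≤ Bₙ/Aₙ + 1/2` we get `B' ≥ (qₙ² − qₙ/2 + 1)·Aₙ`, and since `A' ≤ Aₙ/2` this gives
`B'/A' ≥ 2qₙ² − qₙ + 2`. Hence `q' ≥ 2qₙ² − qₙ + 3/2 = qₙ² + (qₙ − 1/2)² + 5/4 > qₙ²`. -/

section

variable {K : Type*} [Field K] [LinearOrder K] [IsStrictOrderedRing K]

theorem le_mul_add_of_le_div_add_half {A B q : K} (hA : 0 < A) (hq : 0 ≤ q)
    (h : q ≤ B / A + 1 / 2) : (q ^ 2 - q / 2 + 1) * A ≤ q * B + A := by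
  have hB : (q - 1 / 2) * A ≤ B := by
    rwa [← le_div_iff₀ hA, sub_le_iff_le_add]
  nlinarith [mul_le_mul_of_nonneg_left hB hq]

theorem two_mul_le_div_of_le_half {A A' B c : K} (hc : 0 ≤ c) (hA' : 0 < A')
    (h : A' ≤ A / 2) (hB : c * A ≤ B) : 2 * c ≤ B / A' := by
  rw [le_div_iff₀ hA']
  nlinarith [mul_le_mul_of_nonneg_left h hc]

end

theorem next_q_gt_sq_general (An Bn qn A' B' q' : ℝ)
    (hAn : 0 < An) (hqn : 0 < qn) (hA' : 0 < A')
    (hqn_le : qn ≤ Bn / An + 1 / 2)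
    (hA'_le : A' ≤ An / 2)
    (hB' : B' = qn * Bn + An)
    (hq' : B' / A' - 1 / 2 ≤ q') :
    qn ^ 2 < q' := by
  have hc : 0 ≤ qn ^ 2 - qn / 2 + 1 := by nlinarith [sq_nonneg (qn - 1 / 4)]
  have hB'_ge : (qn ^ 2 - qn / 2 + 1) * An ≤ B' :=
    hB' ▸ le_mul_add_of_le_div_add_half hAn hqn.le hqn_le
  have hratio := two_mul_le_div_of_le_half hc hA' hA'_le hB'_ge
  nlinarith [sq_nonneg (qn - 1 / 2)]

/-- One step of the recurrence: if `Aₙ, Bₙ, qₙ, A' > 0` with `qₙ ≤ Bₙ/Aₙ + 1/2`,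
`A' ≤ Aₙ/2`, `B' = qₙ·Bₙ + Aₙ`, and `q' ≥ B'/A' − 1/2`, then `q' > qₙ²`. -/
theorem next_q_gt_sq (An Bn qn A' B' q' : ℝ)
    (hAn : 0 < An) (hBn : 0 < Bn) (hqn : 0 < qn) (hA' : 0 < A')
    (hqn_le : qn ≤ Bn / An + 1 / 2)
    (hA'_le : A' ≤ An / 2)
    (hB' : B' = qn * Bn + An)
    (hq' : B' / A' - 1 / 2 ≤ q') :
    qn ^ 2 < q' :=
  next_q_gt_sq_general An Bn qn A' B' q' hAn hqn hA' hqn_le hA'_le hB' hq'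
end

section
/- Let N ≥ 1 and let q₀, q₁, ..., q_N be natural numbers with q₀ ≥ 2, q₁ ≥ 2·q₀, and q_{n+1} > q_n² for all 1 ≤ n < N. Then the Lehmer measure satisfies Σ_{n=0}^{N} 1/log₁₀(q_n) < 3/log₁₀(q₀). -/
/-!
From `q₁ ≥ 2 q₀` we get `log q₁ ≥ log 2 + log q₀ > log q₀`, and `q_{n+1} > q_n²` doubles the
logarithm at every further step, so `log q_{n+1} ≥ 2ⁿ log q₁`. The reciprocals of the tail
`q₁, …, q_N` are thus dominated by a geometric series of ratio `1/2`, summing to at most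
`2 / log q₁ < 2 / log q₀`.
-/

open Finset Real

theorem sum_one_div_le_of_two_mul_le {x : ℕ → ℝ} {c : ℝ} {N : ℕ} (hc : 0 < c)
    (h0 : c ≤ x 0) (hx : ∀ i, i + 1 < N → 2 * x i ≤ x (i + 1)) :
    ∑ i ∈ range N, 1 / x i ≤ 2 / c := by
  have hlower : ∀ i, i < N → c * 2 ^ i ≤ x i := by
    intro i hi
    induction i with
    | zero => simpa using h0
    | succ i ih =>
      calc c * 2 ^ (i + 1) = 2 * (c * 2 ^ i) := by ring
        _ ≤ 2 * x i := by linarith [ih (by omega)]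
        _ ≤ x (i + 1) := hx i hi
  calc ∑ i ∈ range N, 1 / x i
      ≤ ∑ i ∈ range N, (1 / 2 : ℝ) ^ i / c := by
        refine sum_le_sum fun i hi => ?_
        calc 1 / x i ≤ 1 / (c * 2 ^ i) :=
              one_div_le_one_div_of_le (by positivity) (hlower i (mem_range.mp hi))
          _ = (1 / 2 : ℝ) ^ i / c := by rw [div_pow, one_pow]; field_simp
    _ = (∑ i ∈ range N, (1 / 2 : ℝ) ^ i) / c := by rw [sum_div]
    _ ≤ 2 / c := by gcongr; exact sum_geometric_two_le N

theorem logb_add_logb_le_of_mul_le {b : ℝ} (hb : 1 < b) {k m n : ℕ} (hk : k ≠ 0) (hm : m ≠ 0)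
    (h : k * m ≤ n) : logb b k + logb b m ≤ logb b n := by
  rw [← logb_mul (by positivity) (by positivity)]
  exact logb_le_logb_of_le hb (by positivity) (by exact_mod_cast h)

-- No positivity hypothesis: for `m = 0` the left side is the junk value `logb b 0 = 0`.
theorem two_mul_logb_le_logb_of_sq_le {b : ℝ} (hb : 1 < b) {m n : ℕ} (h : m ^ 2 ≤ n) :
    2 * logb b m ≤ logb b n := by
  rcases Nat.eq_zero_or_pos m with rfl | hm
  · simpa [logb] using div_nonneg (log_natCast_nonneg n) (log_pos hb).le
  · calc 2 * logb b m = logb b ((m : ℝ) ^ 2) := by rw [logb_pow]; norm_num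
      _ ≤ logb b n := logb_le_logb_of_le hb (by positivity) (by exact_mod_cast h)

theorem lehmer_measure_lt_three_general (N : ℕ) (q : ℕ → ℕ)
    (hq0 : 2 ≤ q 0) (hq1 : 2 * q 0 ≤ q 1)
    (hrec : ∀ n, 1 ≤ n → n < N → (q n) ^ 2 < q (n + 1)) :
    ∑ n ∈ Finset.range (N + 1), 1 / Real.logb 10 ((q n : ℝ)) <
      3 / Real.logb 10 ((q 0 : ℝ)) := by
  have hb : (1 : ℝ) < 10 := by norm_num
  have ha : 0 < logb 10 (q 0) := logb_pos hb (by exact_mod_cast hq0)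
  have hlog2 : 0 < logb 10 2 := logb_pos hb one_lt_two
  have htail : ∑ i ∈ range N, 1 / logb 10 (q (i + 1)) ≤ 2 / (logb 10 2 + logb 10 (q 0)) :=
    sum_one_div_le_of_two_mul_le (by positivity)
      (by exact_mod_cast logb_add_logb_le_of_mul_le hb two_ne_zero (by omega) hq1)
      fun i hi => two_mul_logb_le_logb_of_sq_le hb (hrec (i + 1) (by omega) (by omega)).le
  calc ∑ n ∈ range (N + 1), 1 / logb 10 (q n)
      = ∑ i ∈ range N, 1 / logb 10 (q (i + 1)) + 1 / logb 10 (q 0) := sum_range_succ' _ _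
    _ ≤ 2 / (logb 10 2 + logb 10 (q 0)) + 1 / logb 10 (q 0) := by gcongr
    _ < 2 / logb 10 (q 0) + 1 / logb 10 (q 0) := by gcongr; linarith
    _ = 3 / logb 10 (q 0) := by ring

/-- If `N ≥ 1`, `q 0 ≥ 2`, `q 1 ≥ 2·q 0`, and `q (n+1) > (q n)²` for `1 ≤ n < N`, then the
Lehmer measure satisfies `∑_{n=0}^{N} 1/log₁₀ (q n) < 3/log₁₀ (q 0)`. -/
theorem lehmer_measure_lt_three (N : ℕ) (hN : 1 ≤ N) (q : ℕ → ℕ)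
    (hq0 : 2 ≤ q 0) (hq1 : 2 * q 0 ≤ q 1)
    (hrec : ∀ n, 1 ≤ n → n < N → (q n) ^ 2 < q (n + 1)) :
    ∑ n ∈ Finset.range (N + 1), 1 / Real.logb 10 ((q n : ℝ)) <
      3 / Real.logb 10 ((q 0 : ℝ)) :=
  lehmer_measure_lt_three_general N q hq0 hq1 hrec
end

section
/- Let q₀ be a natural number with q₀ ≥ 2. Define integer sequences (a_k), (b_k) by a₀ = b₀ = 1, a_{k+1} = q₀·a_k − b_k, b_{k+1} = q₀·b_k + a_k, and set γ = (π/4)/arctan(1/q₀). Then a_{⌊γ⌋} > 0 and a_{⌊γ⌋+1} < 0. -/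
/-!
Writing `θ = arctan (1/q₀)`, we have `q₀ + i = √(q₀² + 1) e^{iθ}` and `1 + i = √2 e^{iπ/4}`, and the
recurrence says `a_{k+1} + i b_{k+1} = (q₀ + i)(a_k + i b_k)`. Hence
`a_k = √2 (q₀² + 1)^{k/2} cos (π/4 + kθ)`, and `n = ⌊γ⌋` is exactly the last index with
`π/4 + nθ ≤ π/2`; as `θ < π/4`, the next angle lies in `(π/2, 3π/4)`. This gives `a_n ≥ 0` and
`a_{n+1} < 0`, and `a_n ≠ 0` because modulo `q₀` the recurrence reads `a_{k+1} ≡ -b_k`,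
`b_{k+1} ≡ a_k`, so `a_k² ≡ 1`.
-/

open Real

lemma dvd_sq_sub_one_of_rotation_mod {q : ℤ} {a b : ℕ → ℤ}
    (h0 : q ∣ a 0 ^ 2 - 1 ∧ q ∣ b 0 ^ 2 - 1)
    (ha : ∀ k, a (k + 1) = q * a k - b k) (hb : ∀ k, b (k + 1) = q * b k + a k) (k : ℕ) :
    q ∣ a k ^ 2 - 1 ∧ q ∣ b k ^ 2 - 1 := by
  induction k with
  | zero => exact h0
  | succ k ih =>
    rw [ha, hb]
    constructor
    · have h : (q * a k - b k) ^ 2 - 1 = q * (q * a k ^ 2 - 2 * a k * b k) + (b k ^ 2 - 1) := by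
        ring
      exact h ▸ (dvd_mul_right q _).add ih.2
    · have h : (q * b k + a k) ^ 2 - 1 = q * (q * b k ^ 2 + 2 * a k * b k) + (a k ^ 2 - 1) := by
        ring
      exact h ▸ (dvd_mul_right q _).add ih.1

lemma ne_zero_of_dvd_sq_sub_one {q x : ℤ} (hq : 1 < q) (h : q ∣ x ^ 2 - 1) : x ≠ 0 := by
  rintro rfl
  have : q ≤ 1 := Int.le_of_dvd one_pos (by simpa using h)
  omega

lemma rotation_closed_form {a b : ℕ → ℝ} {r θ ρ φ : ℝ}
    (ha0 : a 0 = ρ * cos φ) (hb0 : b 0 = ρ * sin φ)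
    (ha : ∀ k, a (k + 1) = r * cos θ * a k - r * sin θ * b k)
    (hb : ∀ k, b (k + 1) = r * cos θ * b k + r * sin θ * a k) (k : ℕ) :
    a k = ρ * r ^ k * cos (φ + k * θ) ∧ b k = ρ * r ^ k * sin (φ + k * θ) := by
  induction k with
  | zero => simp [ha0, hb0]
  | succ k ih =>
    have hangle : φ + ((k + 1 : ℕ) : ℝ) * θ = (φ + k * θ) + θ := by push_cast; ring
    rw [ha, hb, ih.1, ih.2, hangle, cos_add (φ + k * θ), sin_add (φ + k * θ)]
    constructor <;> ring

lemma sqrt_sq_add_one_mul_cos_sin_arctan_one_div {q : ℝ} (hq : 0 < q) :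
    √(q ^ 2 + 1) * cos (arctan (1 / q)) = q ∧ √(q ^ 2 + 1) * sin (arctan (1 / q)) = 1 := by
  have hsqrt : √(1 + (1 / q) ^ 2) = √(q ^ 2 + 1) / q := by
    rw [show 1 + (1 / q) ^ 2 = (q ^ 2 + 1) / q ^ 2 by field_simp, sqrt_div (by positivity),
      sqrt_sq hq.le]
  have hpos : 0 < √(q ^ 2 + 1) := sqrt_pos.2 (by positivity)
  rw [cos_arctan, sin_arctan, hsqrt]
  constructor <;> field_simp

lemma int_rotation_eq_sqrt_two_mul_cos {q : ℕ} (hq : 0 < q) {a b : ℕ → ℤ}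
    (ha0 : a 0 = 1) (hb0 : b 0 = 1)
    (ha : ∀ k, a (k + 1) = (q : ℤ) * a k - b k) (hb : ∀ k, b (k + 1) = (q : ℤ) * b k + a k)
    (k : ℕ) :
    (a k : ℝ) = √2 * √((q : ℝ) ^ 2 + 1) ^ k * cos (π / 4 + k * arctan (1 / q)) := by
  obtain ⟨hcos, hsin⟩ := sqrt_sq_add_one_mul_cos_sin_arctan_one_div (q := q) (by positivity)
  have hρ : √2 * (√2 / 2) = 1 := by rw [mul_div_assoc', mul_self_sqrt zero_le_two]; norm_num
  exact (rotation_closed_form (a := fun k => (a k : ℝ)) (b := fun k => (b k : ℝ))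
    (r := √((q : ℝ) ^ 2 + 1)) (ρ := √2) (φ := π / 4)
    (by simp [ha0, hρ]) (by simp [hb0, hρ])
    (fun k => by rw [hcos, hsin]; push_cast [ha]; ring)
    (fun k => by rw [hcos, hsin]; push_cast [hb]; ring) k).1

lemma arctan_one_div_lt_pi_div_four {q : ℝ} (hq : 1 < q) : arctan (1 / q) < π / 4 := by
  rw [← arctan_one]
  exact arctan_strictMono ((div_lt_one (by linarith)).2 hq)

lemma toNat_floor_div_mul_bounds {c θ : ℝ} (hc : 0 ≤ c) (hθ : 0 < θ) :
    (⌊c / θ⌋.toNat : ℝ) * θ ≤ c ∧ c < ((⌊c / θ⌋.toNat : ℝ) + 1) * θ := by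
  rw [Int.floor_toNat, ← le_div_iff₀ hθ, ← div_lt_iff₀ hθ]
  exact ⟨Nat.floor_le (by positivity), Nat.lt_floor_add_one _⟩

lemma cos_pi_div_four_add_nonneg {x : ℝ} (hx0 : 0 ≤ x) (hx : x ≤ π / 4) :
    0 ≤ cos (π / 4 + x) :=
  cos_nonneg_of_neg_pi_div_two_le_of_le (by linarith [pi_pos]) (by linarith)

lemma cos_pi_div_four_add_neg {x : ℝ} (hx : π / 4 < x) (hx' : x < π / 2) :
    cos (π / 4 + x) < 0 :=
  cos_neg_of_pi_div_two_lt_of_lt (by linarith) (by linarith [pi_pos])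

/-- For `q₀ ≥ 2`, with `a₀ = b₀ = 1`, `a_{k+1} = q₀·a_k − b_k`, `b_{k+1} = q₀·b_k + a_k`,
and `γ = (π/4)/arctan(1/q₀)`: the sequence `a` is positive at index `⌊γ⌋` and negative at
index `⌊γ⌋ + 1`. -/
theorem a_changes_sign_at_floor (q₀ : ℕ) (hq₀ : 2 ≤ q₀) (a b : ℕ → ℤ)
    (ha0 : a 0 = 1) (hb0 : b 0 = 1)
    (ha : ∀ k, a (k + 1) = (q₀ : ℤ) * a k - b k)
    (hb : ∀ k, b (k + 1) = (q₀ : ℤ) * b k + a k)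
    (γ : ℝ) (hγ : γ = (Real.pi / 4) / Real.arctan (1 / (q₀ : ℝ))) :
    0 < a (⌊γ⌋.toNat) ∧ a (⌊γ⌋.toNat + 1) < 0 := by
  have hq : (2 : ℝ) ≤ q₀ := by exact_mod_cast hq₀
  have hθ : 0 < arctan (1 / (q₀ : ℝ)) := arctan_pos.2 (by positivity)
  obtain ⟨hle, hlt⟩ := toNat_floor_div_mul_bounds (by positivity : 0 ≤ π / 4) hθ
  rw [← hγ] at hle hlt
  set n := ⌊γ⌋.toNat
  have hclosed := int_rotation_eq_sqrt_two_mul_cos (by omega) ha0 hb0 ha hb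
  have hane : a n ≠ 0 := ne_zero_of_dvd_sq_sub_one (q := q₀) (by omega)
    (dvd_sq_sub_one_of_rotation_mod (by simp [ha0, hb0]) ha hb n).1
  have hnonneg : (0 : ℝ) ≤ a n := by
    rw [hclosed]
    have := cos_pi_div_four_add_nonneg (by positivity) hle
    positivity
  refine ⟨lt_of_le_of_ne (by exact_mod_cast hnonneg) hane.symm, ?_⟩
  have hneg : (a (n + 1) : ℝ) < 0 := by
    rw [hclosed]
    refine mul_neg_of_pos_of_neg (by positivity) (cos_pi_div_four_add_neg ?_ ?_) <;>
      push_cast <;> linarith [arctan_one_div_lt_pi_div_four (q := q₀) (by linarith)]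
  exact_mod_cast hneg
end

section
/- Let q₀ be a natural number with q₀ ≥ 2. Define integer sequences (a_k), (b_k) by a₀ = b₀ = 1, a_{k+1} = q₀·a_k − b_k, b_{k+1} = q₀·b_k + a_k, and set γ = (π/4)/arctan(1/q₀). Then for every natural number k with (k : ℝ) ≤ γ + 1, one has b_k > 0 and π/4 − k·arctan(1/q₀) = arctan(a_k/b_k). -/
open Real

/-! With `θ = arctan (1/q)`, the recurrence says `b (k+1) + i a (k+1) = (b k + i a k)(q - i)`, so
`b k + i a k = (1 + i)(q - i)^k` has argument `π/4 - kθ`. In real terms, each step subtracts `θ`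
from `arctan (a k / b k)` by the arctangent subtraction formula, which applies while the remainder
`π/4 - kθ` is still nonnegative; `k ≤ γ + 1` is exactly the condition that this holds up to step `k`. -/

theorem arctan_div_sub_arctan_one_div {q A B : ℝ} (hqB : 0 < q * B) (h : 0 < q * B + A) :
    arctan (A / B) - arctan (1 / q) = arctan ((q * A - B) / (q * B + A)) := by
  have hq : q ≠ 0 := left_ne_zero_of_mul hqB.ne'
  have hB : B ≠ 0 := right_ne_zero_of_mul hqB.ne'
  have hprod : A / B * -(1 / q) = -A / (q * B) := by field_simp
  rw [sub_eq_add_neg, ← arctan_neg, arctan_add (by rw [hprod, div_lt_one hqB]; linarith)]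
  congr 1
  field_simp
  ring

theorem pi_div_four_sub_mul_arctan_eq_arctan_div {q : ℝ} {a b : ℕ → ℝ} (hq : 0 < q)
    (ha0 : a 0 = 1) (hb0 : b 0 = 1)
    (ha : ∀ k, a (k + 1) = q * a k - b k) (hb : ∀ k, b (k + 1) = q * b k + a k) :
    ∀ k : ℕ, ((k : ℝ) - 1) * arctan (1 / q) ≤ π / 4 →
      0 < b k ∧ π / 4 - k * arctan (1 / q) = arctan (a k / b k) := by
  have hθ : 0 < arctan (1 / q) := arctan_pos.mpr (by positivity)
  intro k
  induction k with
  | zero => simp [ha0, hb0, arctan_one]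
  | succ k ih =>
    intro hk
    push_cast at hk
    obtain ⟨hbk, hrem⟩ := ih (by nlinarith)
    have hak : 0 ≤ a k := by
      have hquot : 0 ≤ a k / b k := arctan_nonneg.mp (by rw [← hrem]; linarith)
      simpa [hbk.ne'] using mul_nonneg hquot hbk.le
    have hbk' : 0 < b (k + 1) := by rw [hb]; positivity
    refine ⟨hbk', ?_⟩
    rw [ha, hb, ← arctan_div_sub_arctan_one_div (by positivity) (by positivity), ← hrem]
    push_cast
    ring

/-- For `q₀ ≥ 2`, with `a₀ = b₀ = 1`, `a_{k+1} = q₀·a_k − b_k`, `b_{k+1} = q₀·b_k + a_k`,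
and `γ = (π/4)/arctan(1/q₀)`: for every `k` with `(k : ℝ) ≤ γ + 1`, one has `b k > 0` and
`π/4 − k·arctan(1/q₀) = arctan(a k / b k)`. -/
theorem remainder_formula (q₀ : ℕ) (hq₀ : 2 ≤ q₀) (a b : ℕ → ℤ)
    (ha0 : a 0 = 1) (hb0 : b 0 = 1)
    (ha : ∀ k, a (k + 1) = (q₀ : ℤ) * a k - b k)
    (hb : ∀ k, b (k + 1) = (q₀ : ℤ) * b k + a k)
    (γ : ℝ) (hγ : γ = (Real.pi / 4) / Real.arctan (1 / (q₀ : ℝ))) :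
    ∀ k : ℕ, (k : ℝ) ≤ γ + 1 →
      0 < b k ∧
      Real.pi / 4 - (k : ℝ) * Real.arctan (1 / (q₀ : ℝ)) =
        Real.arctan ((a k : ℝ) / (b k : ℝ)) := by
  intro k hk
  have hq : (0 : ℝ) < q₀ := by exact_mod_cast (by omega : 0 < q₀)
  have hθ : 0 < arctan (1 / (q₀ : ℝ)) := arctan_pos.mpr (by positivity)
  have hk' : ((k : ℝ) - 1) * arctan (1 / (q₀ : ℝ)) ≤ π / 4 := by
    rw [← le_div_iff₀ hθ, ← hγ]
    linarith
  obtain ⟨hbk, heq⟩ := pi_div_four_sub_mul_arctan_eq_arctan_div (a := fun k => (a k : ℝ))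
    (b := fun k => (b k : ℝ)) hq (by simp [ha0]) (by simp [hb0]) (by simp [ha]) (by simp [hb]) k hk'
  exact ⟨by exact_mod_cast hbk, heq⟩
end
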